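/- arXiv:2503.06993 — 2 statements merged into one kernel-verified Lean document; each statement's English description precedes it below -/
import Mathlib

section
/- Let K and C be positive natural numbers, let v₁, …, v_C be vectors in a real inner product space with ‖v_c‖ ≤ G for every c and some G ≥ 0. For each client k ∈ {1, …, K} let (π_c^k)_{c=1}^C be a probability vector, let (π_c)_{c=1}^C be a probability vector, and define ∇F_k = ∑_{c=1}^C π_c^k v_c and ∇F = ∑_{c=1}^C π_c v_c. Define the between-client gradient diversity δ_s² = (1/K) ∑_{k=1}^K ‖∇F_k − ∇F‖² and the distribution discrepancy Δ_π² = (1/K) ∑_{k=1}^K ∑_{c=1}^C (π_c^k − π_c)². Then δ_s² ≤ G² · C · Δ_π². Moreover, if the vectors v₁, …, v_C are pairwise orthogonal, then δ_s² ≤ G² · Δ_π². (Convergence Difficulty in Traditional Prompt Tuning: the between-client gradient variance term that slows convergence is bounded by the class-proportion discrepancy across clients.) -/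
/-! ∇F_k − ∇F = ∑_c (π_c^k − π_c) v_c, so it suffices to bound ‖∑_c a_c v_c‖² for arbitrary real
coefficients. The triangle inequality and Cauchy–Schwarz give G² · C · ∑_c a_c²; for pairwise
orthogonal v_c, Pythagoras gives ∑_c a_c² ‖v_c‖² ≤ G² ∑_c a_c² without the factor C. -/

open Finset

section

variable {ι E : Type*} [Fintype ι] [NormedAddCommGroup E] [InnerProductSpace ℝ E]

theorem norm_sum_sq_eq_sum_norm_sq_of_pairwise_inner_eq_zero {w : ι → E}
    (hw : Pairwise fun i j => inner ℝ (w i) (w j) = (0 : ℝ)) :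
    ‖∑ i, w i‖ ^ 2 = ∑ i, ‖w i‖ ^ 2 := by
  classical
  rw [← real_inner_self_eq_norm_sq, sum_inner]
  refine sum_congr rfl fun i _ => ?_
  rw [inner_sum, sum_eq_single i (fun j _ hji => hw hji.symm) (by simp),
    real_inner_self_eq_norm_sq]

theorem norm_sum_smul_sq_le_card_mul {v : ι → E} {G : ℝ} (hv : ∀ i, ‖v i‖ ≤ G) (a : ι → ℝ) :
    ‖∑ i, a i • v i‖ ^ 2 ≤ G ^ 2 * Fintype.card ι * ∑ i, a i ^ 2 := by
  have hnorm : ‖∑ i, a i • v i‖ ≤ G * ∑ i, |a i| :=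
    calc ‖∑ i, a i • v i‖ ≤ ∑ i, ‖a i • v i‖ := norm_sum_le _ _
      _ ≤ ∑ i, |a i| * G := by
        gcongr with i
        rw [norm_smul, Real.norm_eq_abs]
        exact mul_le_mul_of_nonneg_left (hv i) (abs_nonneg _)
      _ = G * ∑ i, |a i| := by rw [← sum_mul, mul_comm]
  have cauchy_schwarz : (∑ i, |a i|) ^ 2 ≤ Fintype.card ι * ∑ i, a i ^ 2 := by
    simpa only [sq_abs, card_univ] using sq_sum_le_card_mul_sum_sq (s := univ) (f := fun i => |a i|)
  calc ‖∑ i, a i • v i‖ ^ 2 ≤ (G * ∑ i, |a i|) ^ 2 := pow_le_pow_left₀ (norm_nonneg _) hnorm 2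
    _ = G ^ 2 * (∑ i, |a i|) ^ 2 := mul_pow _ _ _
    _ ≤ G ^ 2 * (Fintype.card ι * ∑ i, a i ^ 2) := by gcongr
    _ = G ^ 2 * Fintype.card ι * ∑ i, a i ^ 2 := (mul_assoc _ _ _).symm

theorem norm_sum_smul_sq_le_of_pairwise_inner_eq_zero {v : ι → E} {G : ℝ}
    (hv : ∀ i, ‖v i‖ ≤ G) (horth : Pairwise fun i j => inner ℝ (v i) (v j) = (0 : ℝ))
    (a : ι → ℝ) :
    ‖∑ i, a i • v i‖ ^ 2 ≤ G ^ 2 * ∑ i, a i ^ 2 := by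
  have hsmul : Pairwise fun i j => inner ℝ (a i • v i) (a j • v j) = (0 : ℝ) := fun i j hij => by
    dsimp only
    rw [real_inner_smul_left, real_inner_smul_right, horth hij, mul_zero, mul_zero]
  rw [norm_sum_sq_eq_sum_norm_sq_of_pairwise_inner_eq_zero hsmul, mul_sum]
  gcongr with i
  rw [norm_smul, mul_pow, Real.norm_eq_abs, sq_abs, mul_comm]
  gcongr
  exact hv i

end

theorem convergence_difficulty_prompt_tuning_general
    {E : Type*} [NormedAddCommGroup E] [InnerProductSpace ℝ E]
    (K C : ℕ)
    (v : Fin C → E) (G : ℝ) (hv : ∀ c, ‖v c‖ ≤ G)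
    (πk : Fin K → Fin C → ℝ) (π : Fin C → ℝ) :
    (1 / (K : ℝ)) * ∑ k, ‖(∑ c, πk k c • v c) - ∑ c, π c • v c‖ ^ 2
      ≤ G ^ 2 * C * ((1 / (K : ℝ)) * ∑ k, ∑ c, (πk k c - π c) ^ 2) ∧
    ((∀ c c', c ≠ c' → inner ℝ (v c) (v c') = (0 : ℝ)) →
      (1 / (K : ℝ)) * ∑ k, ‖(∑ c, πk k c • v c) - ∑ c, π c • v c‖ ^ 2
        ≤ G ^ 2 * ((1 / (K : ℝ)) * ∑ k, ∑ c, (πk k c - π c) ^ 2)) := by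
  have hdiff : ∀ k, (∑ c, πk k c • v c) - ∑ c, π c • v c = ∑ c, (πk k c - π c) • v c :=
    fun k => by simp only [sub_smul, sum_sub_distrib]
  have average_le : ∀ M : ℝ,
      (∀ k, ‖∑ c, (πk k c - π c) • v c‖ ^ 2 ≤ M * ∑ c, (πk k c - π c) ^ 2) →
      (1 / (K : ℝ)) * ∑ k, ‖(∑ c, πk k c • v c) - ∑ c, π c • v c‖ ^ 2
        ≤ M * ((1 / (K : ℝ)) * ∑ k, ∑ c, (πk k c - π c) ^ 2) := fun M hM => by
    rw [mul_left_comm, mul_sum univ _ M]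
    simp only [hdiff]
    gcongr with k
    exact hM k
  refine ⟨average_le _ fun k => ?_, fun horth => average_le _ fun k => ?_⟩
  · simpa only [Fintype.card_fin] using norm_sum_smul_sq_le_card_mul hv _
  · exact norm_sum_smul_sq_le_of_pairwise_inner_eq_zero hv horth _

/-- Convergence Difficulty in Traditional Prompt Tuning: the between-client gradient
diversity `δ_s² = (1/K) ∑ₖ ‖∇F_k − ∇F‖²` is bounded by `G² · C · Δ_π²`, where
`Δ_π² = (1/K) ∑ₖ ∑_c (π_c^k − π_c)²` is the distribution discrepancy; and if the
class-specific gradients are pairwise orthogonal, by `G² · Δ_π²`. -/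
theorem convergence_difficulty_prompt_tuning
    {E : Type*} [NormedAddCommGroup E] [InnerProductSpace ℝ E]
    (K C : ℕ) (hK : 0 < K) (hC : 0 < C)
    (v : Fin C → E) (G : ℝ) (hG : 0 ≤ G) (hv : ∀ c, ‖v c‖ ≤ G)
    (πk : Fin K → Fin C → ℝ) (π : Fin C → ℝ)
    (hπk_nonneg : ∀ k c, 0 ≤ πk k c) (hπk_sum : ∀ k, ∑ c, πk k c = 1)
    (hπ_nonneg : ∀ c, 0 ≤ π c) (hπ_sum : ∑ c, π c = 1) :
    (1 / (K : ℝ)) * ∑ k, ‖(∑ c, πk k c • v c) - ∑ c, π c • v c‖ ^ 2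
      ≤ G ^ 2 * C * ((1 / (K : ℝ)) * ∑ k, ∑ c, (πk k c - π c) ^ 2) ∧
    ((∀ c c', c ≠ c' → inner ℝ (v c) (v c') = (0 : ℝ)) →
      (1 / (K : ℝ)) * ∑ k, ‖(∑ c, πk k c • v c) - ∑ c, π c • v c‖ ^ 2
        ≤ G ^ 2 * ((1 / (K : ℝ)) * ∑ k, ∑ c, (πk k c - π c) ^ 2)) :=
  convergence_difficulty_prompt_tuning_general K C v G hv πk π
end

section
/- Let d be a positive natural number, let F : ℝ^d → ℝ be differentiable with L-Lipschitz gradient for some L > 0 and bounded below by F* ∈ ℝ. Let (Ω, ℱ, P) be a probability space with a filtration (ℱ_t)_{t≥0}, and let the SGD iterates be P_{t+1} = P_t − η g_t, where P_0 is deterministic, each P_t is ℱ_t-measurable, each g_t is ℱ_{t+1}-measurable and square-integrable with conditional mean E[g_t ∣ ℱ_t] = ∇F(P_t) and conditional variance bound E[‖g_t − ∇F(P_t)‖² ∣ ℱ_t] ≤ σ_tot² almost surely, and 0 < η ≤ 1/L. Then for every positive natural number T, (1/T) ∑_{t=0}^{T−1} E[‖∇F(P_t)‖²] ≤ 2 (F(P_0)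 − F*) / (η T) + η L σ_tot². (Impact on Convergence Rate: the total stochastic-gradient variance σ_tot² — which in the federated long-tailed setting equals the within-client variance σ² plus the between-client term G² h(ρ) growing with the imbalance ratio ρ — degrades the convergence rate of SGD.) -/
/-!
Along the line `s ↦ x + s • v` the Lipschitz bound on `∇F` gives the descent inequality
`F (x + v) ≤ F x + ⟪∇F x, v⟫ + L/2 ‖v‖²`. Applied to one SGD step and integrated, the cross term
`E⟪∇F(P_t), g_t⟫` equals `E‖∇F(P_t)‖²` by the pull-out property of the conditional expectation,
and `E‖g_t‖² = E‖g_t - ∇F(P_t)‖² + E‖∇F(P_t)‖² ≤ E‖∇F(P_t)‖² + σ²`. Since `Lη ≤ 1`, the expected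
loss decreases by at least `η/2 · E‖∇F(P_t)‖² - Lη²σ²/2` per step; telescoping over `t < T` and
`F ≥ F*` gives the bound.
-/

open MeasureTheory
open scoped RealInnerProductSpace

section Smooth

variable {E : Type*} [NormedAddCommGroup E] [InnerProductSpace ℝ E] [CompleteSpace E]
  {F : E → ℝ} {L : ℝ}

theorem apply_add_le_of_lipschitz_gradient (hF : Differentiable ℝ F)
    (hlip : ∀ x y, ‖gradient F x - gradient F y‖ ≤ L * ‖x - y‖) (x v : E) :
    F (x + v) ≤ F x + ⟪gradient F x, v⟫ + L / 2 * ‖v‖ ^ 2 := by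
  set φ : ℝ → ℝ := fun s => F (x + s • v) - s * ⟪gradient F x, v⟫ - L / 2 * s ^ 2 * ‖v‖ ^ 2
  have hφ' : ∀ s, HasDerivAt φ
      (⟪gradient F (x + s • v), v⟫ - ⟪gradient F x, v⟫ - L * s * ‖v‖ ^ 2) s := by
    intro s
    have hline : HasDerivAt (fun s : ℝ => x + s • v) v s := by
      simpa using ((hasDerivAt_id s).smul_const v).const_add x
    have hFline := (hF (x + s • v)).hasFDerivAt.comp_hasDerivAt s hline
    rw [← inner_gradient_left] at hFline
    have hquad := ((hasDerivAt_pow 2 s).const_mul (L / 2)).mul_const (‖v‖ ^ 2)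
    refine ((hFline.sub ((hasDerivAt_id s).mul_const ⟪gradient F x, v⟫)).sub hquad).congr_deriv ?_
    simp only [Nat.cast_ofNat, Nat.add_one_sub_one, pow_one]
    ring
  have hφ'_nonpos : ∀ s ∈ interior (Set.Ici (0 : ℝ)),
      ⟪gradient F (x + s • v), v⟫ - ⟪gradient F x, v⟫ - L * s * ‖v‖ ^ 2 ≤ 0 := by
    intro s hs
    rw [interior_Ici] at hs
    calc ⟪gradient F (x + s • v), v⟫ - ⟪gradient F x, v⟫ - L * s * ‖v‖ ^ 2
        = ⟪gradient F (x + s • v) - gradient F x, v⟫ - L * s * ‖v‖ ^ 2 := by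
          rw [inner_sub_left]
      _ ≤ ‖gradient F (x + s • v) - gradient F x‖ * ‖v‖ - L * s * ‖v‖ ^ 2 := by
          gcongr; exact real_inner_le_norm _ _
      _ ≤ L * ‖s • v‖ * ‖v‖ - L * s * ‖v‖ ^ 2 := by
          gcongr; simpa using hlip (x + s • v) x
      _ = 0 := by
          rw [norm_smul, Real.norm_of_nonneg hs.le]; ring
  have hanti : AntitoneOn φ (Set.Ici 0) :=
    antitoneOn_of_hasDerivWithinAt_nonpos (convex_Ici 0)
      (fun s _ => (hφ' s).continuousAt.continuousWithinAt)
      (fun s _ => (hφ' s).hasDerivWithinAt) hφ'_nonpos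
  have hφ_one_le := hanti Set.self_mem_Ici (Set.mem_Ici.2 zero_le_one) zero_le_one
  simp only [φ, zero_smul, add_zero, one_smul] at hφ_one_le
  linarith

theorem lipschitzWith_gradient (hlip : ∀ x y, ‖gradient F x - gradient F y‖ ≤ L * ‖x - y‖) :
    LipschitzWith L.toNNReal (gradient F) :=
  LipschitzWith.of_dist_le_mul fun x y => by
    rw [dist_eq_norm, dist_eq_norm]
    exact (hlip x y).trans (by gcongr; exact L.le_coe_toNNReal)

end Smooth

section Probability

variable {Ω E : Type*} {m m0 : MeasurableSpace Ω} {μ : Measure Ω}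
  [NormedAddCommGroup E] [InnerProductSpace ℝ E]

theorem MeasureTheory.MemLp.integrable_inner {f g : Ω → E} (hf : MemLp f 2 μ) (hg : MemLp g 2 μ) :
    Integrable (fun ω => ⟪f ω, g ω⟫) μ :=
  (L2.integrable_inner (𝕜 := ℝ) (hf.toLp f) (hg.toLp g)).congr <| by
    filter_upwards [hf.coeFn_toLp, hg.coeFn_toLp] with ω hfω hgω
    rw [hfω, hgω]

theorem integral_le_of_ae_condExp_le [IsProbabilityMeasure μ] (hm : m ≤ m0) {f : Ω → ℝ} {c : ℝ}
    (hf : ∀ᵐ ω ∂μ, μ[f|m] ω ≤ c) : ∫ ω, f ω ∂μ ≤ c := by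
  rw [← integral_condExp hm]
  simpa using integral_mono_ae integrable_condExp (integrable_const c) hf

variable [CompleteSpace E] [IsFiniteMeasure μ]

theorem integral_inner_eq_integral_norm_sq_of_condExp_eq (hm : m ≤ m0) {g h : Ω → E}
    (hh : StronglyMeasurable[m] h) (hhg : Integrable (fun ω => ⟪h ω, g ω⟫) μ)
    (hg : Integrable g μ) (hgh : μ[g|m] =ᵐ[μ] h) :
    ∫ ω, ⟪h ω, g ω⟫ ∂μ = ∫ ω, ‖h ω‖ ^ 2 ∂μ := by
  have hpull := condExp_bilin_of_stronglyMeasurable_left (innerSL ℝ) hh hhg hg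
  calc ∫ ω, ⟪h ω, g ω⟫ ∂μ = ∫ ω, (μ[fun ω => ⟪h ω, g ω⟫|m]) ω ∂μ :=
        (integral_condExp hm).symm
    _ = ∫ ω, ‖h ω‖ ^ 2 ∂μ := integral_congr_ae <| by
        filter_upwards [hpull, hgh] with ω hpullω hghω
        rw [← real_inner_self_eq_norm_sq]
        nth_rw 2 [← hghω]
        exact hpullω

theorem integral_norm_sq_eq_add_of_condExp_eq (hm : m ≤ m0) {g h : Ω → E}
    (hh : StronglyMeasurable[m] h) (hh2 : MemLp h 2 μ) (hg2 : MemLp g 2 μ)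
    (hgh : μ[g|m] =ᵐ[μ] h) :
    ∫ ω, ‖g ω‖ ^ 2 ∂μ = ∫ ω, ‖g ω - h ω‖ ^ 2 ∂μ + ∫ ω, ‖h ω‖ ^ 2 ∂μ := by
  have hcross := integral_inner_eq_integral_norm_sq_of_condExp_eq hm hh
    (hh2.integrable_inner hg2) (hg2.integrable one_le_two) hgh
  have hexpand : ∫ ω, ‖g ω - h ω‖ ^ 2 ∂μ
      = ∫ ω, ‖g ω‖ ^ 2 ∂μ - 2 * ∫ ω, ⟪h ω, g ω⟫ ∂μ + ∫ ω, ‖h ω‖ ^ 2 ∂μ := by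
    have hg_sq := hg2.integrable_norm_pow two_ne_zero
    have hinner := (hh2.integrable_inner hg2).const_mul 2
    simp_rw [norm_sub_sq_real, real_inner_comm (h _)]
    rw [integral_add (hg_sq.sub' hinner) (hh2.integrable_norm_pow two_ne_zero),
      integral_sub hg_sq hinner, integral_const_mul]
  linarith

end Probability

section SGD

variable {Ω E : Type*} {m m0 : MeasurableSpace Ω} {μ : Measure Ω}
  [NormedAddCommGroup E] [InnerProductSpace ℝ E] [CompleteSpace E] {F : E → ℝ} {L : ℝ}

theorem integrable_comp_of_lipschitz_gradient [IsFiniteMeasure μ] (hF : Differentiable ℝ F)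
    (hlip : ∀ x y, ‖gradient F x - gradient F y‖ ≤ L * ‖x - y‖) {c : ℝ} (hc : ∀ x, c ≤ F x)
    {X : Ω → E} (hX : MemLp X 2 μ) : Integrable (fun ω => F (X ω)) μ := by
  have hupper : ∀ ω, F (X ω) ≤ F 0 + ⟪gradient F 0, X ω⟫ + L / 2 * ‖X ω‖ ^ 2 := fun ω => by
    simpa only [zero_add] using apply_add_le_of_lipschitz_gradient hF hlip 0 (X ω)
  refine integrable_of_le_of_le (hF.continuous.comp_aestronglyMeasurable hX.1)
    (ae_of_all _ fun ω => hc (X ω)) (ae_of_all _ hupper) (integrable_const c) ?_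
  exact ((integrable_const (F 0)).add ((hX.integrable one_le_two).const_inner _)).add
    ((hX.integrable_norm_pow two_ne_zero).const_mul _)

theorem integral_apply_sub_smul_le_of_condExp_eq_gradient [IsProbabilityMeasure μ]
    (hF : Differentiable ℝ F)
    (hlip : ∀ x y, ‖gradient F x - gradient F y‖ ≤ L * ‖x - y‖) (hL : 0 ≤ L) {c : ℝ}
    (hc : ∀ x, c ≤ F x) (hm : m ≤ m0) {X G : Ω → E} {η σ : ℝ}
    (hXm : StronglyMeasurable[m] X) (hX : MemLp X 2 μ) (hG : MemLp G 2 μ)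
    (hmean : μ[G|m] =ᵐ[μ] fun ω => gradient F (X ω))
    (hvar : ∀ᵐ ω ∂μ, μ[fun ω' => ‖G ω' - gradient F (X ω')‖ ^ 2|m] ω ≤ σ ^ 2)
    (hη : 0 ≤ η) (hLη : L * η ≤ 1) :
    ∫ ω, F (X ω - η • G ω) ∂μ
      ≤ ∫ ω, F (X ω) ∂μ - η / 2 * ∫ ω, ‖gradient F (X ω)‖ ^ 2 ∂μ + L * η ^ 2 / 2 * σ ^ 2 := by
  have hHm : StronglyMeasurable[m] fun ω => gradient F (X ω) :=
    (lipschitzWith_gradient hlip).continuous.comp_stronglyMeasurable hXm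
  have hH : MemLp (fun ω => gradient F (X ω)) 2 μ := (hG.condExp one_le_two).ae_eq hmean
  have hcross : ∫ ω, ⟪gradient F (X ω), G ω⟫ ∂μ = ∫ ω, ‖gradient F (X ω)‖ ^ 2 ∂μ :=
    integral_inner_eq_integral_norm_sq_of_condExp_eq hm hHm (hH.integrable_inner hG)
      (hG.integrable one_le_two) hmean
  have hsecond : ∫ ω, ‖G ω‖ ^ 2 ∂μ ≤ ∫ ω, ‖gradient F (X ω)‖ ^ 2 ∂μ + σ ^ 2 := by
    rw [integral_norm_sq_eq_add_of_condExp_eq hm hHm hH hG hmean]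
    linarith [integral_le_of_ae_condExp_le hm hvar]
  have hpointwise : ∀ ω, F (X ω - η • G ω)
      ≤ F (X ω) - η * ⟪gradient F (X ω), G ω⟫ + L * η ^ 2 / 2 * ‖G ω‖ ^ 2 := fun ω => by
    have := apply_add_le_of_lipschitz_gradient hF hlip (X ω) (-(η • G ω))
    rw [← sub_eq_add_neg, inner_neg_right, real_inner_smul_right, norm_neg, norm_smul,
      Real.norm_of_nonneg hη, mul_pow] at this
    linarith
  have hmono : ∫ ω, F (X ω - η • G ω) ∂μ ≤ ∫ ω, F (X ω) ∂μ
      - η * ∫ ω, ⟪gradient F (X ω), G ω⟫ ∂μ + L * η ^ 2 / 2 * ∫ ω, ‖G ω‖ ^ 2 ∂μ := by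
    have hFX := integrable_comp_of_lipschitz_gradient hF hlip hc hX
    have hinner := (hH.integrable_inner hG).const_mul η
    have hG_sq := (hG.integrable_norm_pow two_ne_zero).const_mul (L * η ^ 2 / 2)
    rw [← integral_const_mul, ← integral_const_mul, ← integral_sub hFX hinner,
      ← integral_add (hFX.sub' hinner) hG_sq]
    exact integral_mono (integrable_comp_of_lipschitz_gradient hF hlip hc
      (hX.sub (hG.const_smul η))) ((hFX.sub' hinner).fun_add hG_sq) hpointwise
  have hA : 0 ≤ ∫ ω, ‖gradient F (X ω)‖ ^ 2 ∂μ := integral_nonneg fun ω => sq_nonneg _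
  rw [hcross] at hmono
  nlinarith [mul_le_mul_of_nonneg_left hsecond (by positivity : 0 ≤ L * η ^ 2 / 2),
    mul_nonneg (mul_nonneg hη (sub_nonneg.2 hLη)) hA]

end SGD

theorem mul_sum_range_le_of_le_sub_add {a b : ℕ → ℝ} {c e lb : ℝ}
    (hstep : ∀ t, a (t + 1) ≤ a t - c * b t + e) (hlb : ∀ t, lb ≤ a t) (T : ℕ) :
    c * ∑ t ∈ Finset.range T, b t ≤ a 0 - lb + T * e := by
  suffices h : a T + c * ∑ t ∈ Finset.range T, b t ≤ a 0 + T * e by linarith [hlb T]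
  induction T with
  | zero => simp
  | succ T ih =>
    rw [Finset.sum_range_succ, Nat.cast_succ]
    linarith [hstep T]

theorem sgd_convergence_rate_total_variance_general
    (d : ℕ) (F : EuclideanSpace ℝ (Fin d) → ℝ)
    (hF : Differentiable ℝ F) (L : ℝ) (hL : 0 < L)
    (hlip : ∀ x y, ‖gradient F x - gradient F y‖ ≤ L * ‖x - y‖)
    (Fstar : ℝ) (hbdd : ∀ x, Fstar ≤ F x)
    {Ω : Type*} {m0 : MeasurableSpace Ω} (P : Measure Ω) [IsProbabilityMeasure P]
    (ℱ : Filtration ℕ m0)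
    (η : ℝ) (hη : 0 < η) (hηL : η ≤ 1 / L)
    (σtot : ℝ)
    (p0 : EuclideanSpace ℝ (Fin d))
    (Piter : ℕ → Ω → EuclideanSpace ℝ (Fin d))
    (g : ℕ → Ω → EuclideanSpace ℝ (Fin d))
    (hP0 : Piter 0 = fun _ => p0)
    (hPrec : ∀ t ω, Piter (t + 1) ω = Piter t ω - η • g t ω)
    (hPmeas : ∀ t, StronglyMeasurable[ℱ t] (Piter t))
    (hgL2 : ∀ t, MemLp (g t) 2 P)
    (hmean : ∀ t, P[g t | ℱ t] =ᵐ[P] fun ω => gradient F (Piter t ω))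
    (hvar : ∀ t, ∀ᵐ ω ∂P,
      (P[fun ω' => ‖g t ω' - gradient F (Piter t ω')‖ ^ 2 | ℱ t]) ω ≤ σtot ^ 2) :
    ∀ T : ℕ, 0 < T →
      (1 / (T : ℝ)) * ∑ t ∈ Finset.range T, ∫ ω, ‖gradient F (Piter t ω)‖ ^ 2 ∂P
        ≤ 2 * (F p0 - Fstar) / (η * T) + η * L * σtot ^ 2 := by
  intro T hT
  have hLη : L * η ≤ 1 := by rwa [le_div_iff₀ hL, mul_comm] at hηL
  have hPiter : ∀ t, MemLp (Piter t) 2 P := by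
    intro t
    induction t with
    | zero => rw [hP0]; exact memLp_const p0
    | succ t ih => rw [funext (hPrec t)]; exact ih.sub ((hgL2 t).const_smul η)
  have hdescent : ∀ t, ∫ ω, F (Piter (t + 1) ω) ∂P ≤ ∫ ω, F (Piter t ω) ∂P
      - η / 2 * ∫ ω, ‖gradient F (Piter t ω)‖ ^ 2 ∂P + L * η ^ 2 / 2 * σtot ^ 2 := fun t => by
    simpa only [hPrec] using integral_apply_sub_smul_le_of_condExp_eq_gradient hF hlip hL.le
      hbdd (ℱ.le t) (hPmeas t) (hPiter t) (hgL2 t) (hmean t) (hvar t) hη.le hLη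
  have hlower : ∀ t, Fstar ≤ ∫ ω, F (Piter t ω) ∂P := fun t => by
    simpa using integral_mono (integrable_const Fstar)
      (integrable_comp_of_lipschitz_gradient hF hlip hbdd (hPiter t)) fun ω => hbdd _
  have hsum := mul_sum_range_le_of_le_sub_add hdescent hlower T
  simp only [hP0, integral_const, probReal_univ, one_smul] at hsum
  have hT' : (0 : ℝ) < T := Nat.cast_pos.2 hT
  calc 1 / (T : ℝ) * ∑ t ∈ Finset.range T, ∫ ω, ‖gradient F (Piter t ω)‖ ^ 2 ∂P
      = 2 / (η * T) * (η / 2 * ∑ t ∈ Finset.range T, ∫ ω, ‖gradient F (Piter t ω)‖ ^ 2 ∂P) := by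
        field_simp
    _ ≤ 2 / (η * T) * (F p0 - Fstar + T * (L * η ^ 2 / 2 * σtot ^ 2)) := by gcongr
    _ = 2 * (F p0 - Fstar) / (η * T) + η * L * σtot ^ 2 := by field_simp

/-- Impact on Convergence Rate: for SGD iterates `P_{t+1} = P_t − η g_t` on an
`L`-smooth objective `F` bounded below by `F*`, where the stochastic gradients `g_t` are
adapted to a filtration, conditionally unbiased (`E[g_t | ℱ_t] = ∇F(P_t)`) and have
conditional variance at most `σ_tot²`, with `0 < η ≤ 1/L`, for every `T > 0`,
`(1/T) ∑_{t<T} E[‖∇F(P_t)‖²] ≤ 2 (F(P_0) − F*)/(η T) + η L σ_tot²`. -/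
theorem sgd_convergence_rate_total_variance
    (d : ℕ) (hd : 0 < d) (F : EuclideanSpace ℝ (Fin d) → ℝ)
    (hF : Differentiable ℝ F) (L : ℝ) (hL : 0 < L)
    (hlip : ∀ x y, ‖gradient F x - gradient F y‖ ≤ L * ‖x - y‖)
    (Fstar : ℝ) (hbdd : ∀ x, Fstar ≤ F x)
    {Ω : Type*} {m0 : MeasurableSpace Ω} (P : Measure Ω) [IsProbabilityMeasure P]
    (ℱ : Filtration ℕ m0)
    (η : ℝ) (hη : 0 < η) (hηL : η ≤ 1 / L)
    (σtot : ℝ) (hσ : 0 ≤ σtot)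
    (p0 : EuclideanSpace ℝ (Fin d))
    (Piter : ℕ → Ω → EuclideanSpace ℝ (Fin d))
    (g : ℕ → Ω → EuclideanSpace ℝ (Fin d))
    (hP0 : Piter 0 = fun _ => p0)
    (hPrec : ∀ t ω, Piter (t + 1) ω = Piter t ω - η • g t ω)
    (hPmeas : ∀ t, StronglyMeasurable[ℱ t] (Piter t))
    (hgmeas : ∀ t, StronglyMeasurable[ℱ (t + 1)] (g t))
    (hgL2 : ∀ t, MemLp (g t) 2 P)
    (hmean : ∀ t, P[g t | ℱ t] =ᵐ[P] fun ω => gradient F (Piter t ω))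
    (hvar : ∀ t, ∀ᵐ ω ∂P,
      (P[fun ω' => ‖g t ω' - gradient F (Piter t ω')‖ ^ 2 | ℱ t]) ω ≤ σtot ^ 2) :
    ∀ T : ℕ, 0 < T →
      (1 / (T : ℝ)) * ∑ t ∈ Finset.range T, ∫ ω, ‖gradient F (Piter t ω)‖ ^ 2 ∂P
        ≤ 2 * (F p0 - Fstar) / (η * T) + η * L * σtot ^ 2 :=
  sgd_convergence_rate_total_variance_general d F hF L hL hlip Fstar hbdd P ℱ η hη hηL σtot p0 Piter
    g hP0 hPrec hPmeas hgL2 hmean hvar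
end
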